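/- arXiv:0802.0445 — 4 statements merged into one kernel-verified Lean document; each statement's English description precedes it below -/
import Mathlib

section
/- Suppose the first-order differential calculus (Ω¹, d) on A is inner, i.e. there exists a one-form Ξ ∈ Ω¹ such that da = aΞ − Ξa for all a ∈ A. Then for every right A-module M, the evaluation map ∇₀^Ξ : Hom_A(Ω¹, M) → M, f ↦ f(Ξ), is a hom-connection. -/
open MulOpposite

section HomConnection

variable {k A Ω M : Type*} [Field k] [Ring A] [Algebra k A]
  [AddCommGroup Ω] [Module k Ω] [Module A Ω] [Module Aᵐᵒᵖ Ω]
  [SMulCommClass A Aᵐᵒᵖ Ω]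
  [AddCommGroup M] [Module k M] [Module Aᵐᵒᵖ M] [SMulCommClass Aᵐᵒᵖ k M]

/-- The right `A`-action on the space `Hom_A(Ω¹, M)` of right `A`-linear maps:
`(f · a) ω := f (a • ω)`. -/
def rsmulHom (a : A) (f : Ω →ₗ[Aᵐᵒᵖ] M) : Ω →ₗ[Aᵐᵒᵖ] M where
  toFun ω := f (a • ω)
  map_add' x y := by simp [smul_add]
  map_smul' b ω := by
    haveI := SMulCommClass.symm A Aᵐᵒᵖ Ω
    show f (a • b • ω) = b • f (a • ω)
    rw [smul_comm a b ω, map_smul]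

/-- A first-order differential calculus on `A`: a `k`-linear map `d : A → Ω` into an
`A`-bimodule satisfying the Leibniz rule `d(ab) = (da)·b + a·(db)`. -/
def IsFODC (d : A →ₗ[k] Ω) : Prop :=
  ∀ a b : A, d (a * b) = a • d b + op b • d a

/-- A hom-connection `(M, ∇₀)`: a `k`-linear map `∇₀ : Hom_A(Ω¹, M) → M` such that
`∇₀(f·a) = ∇₀(f)·a + f(da)`. -/
def IsHomConnection (d : A →ₗ[k] Ω) (D : (Ω →ₗ[Aᵐᵒᵖ] M) → M) : Prop :=
  IsLinearMap k D ∧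
    ∀ (f : Ω →ₗ[Aᵐᵒᵖ] M) (a : A), D (rsmulHom a f) = op a • D f + f (d a)

@[simp]
theorem rsmulHom_apply (a : A) (f : Ω →ₗ[Aᵐᵒᵖ] M) (ω : Ω) : rsmulHom a f ω = f (a • ω) :=
  rfl

omit [Algebra k A] [Module k Ω] [Module A Ω] [SMulCommClass A Aᵐᵒᵖ Ω] in
theorem isLinearMap_eval (ω : Ω) : IsLinearMap k (fun f : Ω →ₗ[Aᵐᵒᵖ] M => f ω) :=
  ⟨fun _ _ => rfl, fun _ _ => rfl⟩

theorem rsmulHom_apply_of_eq_sub (f : Ω →ₗ[Aᵐᵒᵖ] M) {a : A} {ω η : Ω}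
    (h : η = a • ω - op a • ω) : rsmulHom a f ω = op a • f ω + f η := by
  rw [rsmulHom_apply, h, map_sub, f.map_smul (op a) ω, add_sub_cancel]

theorem inner_calculus_evaluation_isHomConnection_general
    (d : A →ₗ[k] Ω)
    (Ξ : Ω) (hΞ : ∀ a : A, d a = a • Ξ - op a • Ξ) :
    IsHomConnection d (fun f : Ω →ₗ[Aᵐᵒᵖ] M => f Ξ) :=
  ⟨isLinearMap_eval Ξ, fun f a => rsmulHom_apply_of_eq_sub f (hΞ a)⟩

/-- If the calculus `(Ω¹, d)` is inner, generated by the one-form `Ξ`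
(that is, `d a = a • Ξ - Ξ · a` for all `a`), then for any right `A`-module `M` the
evaluation map `f ↦ f Ξ` is a hom-connection. -/
theorem inner_calculus_evaluation_isHomConnection
    (d : A →ₗ[k] Ω) (hd : IsFODC d)
    (Ξ : Ω) (hΞ : ∀ a : A, d a = a • Ξ - op a • Ξ) :
    IsHomConnection d (fun f : Ω →ₗ[Aᵐᵒᵖ] M => f Ξ) :=
  inner_calculus_evaluation_isHomConnection_general d Ξ hΞ

end HomConnection
end

section
/- A ℂ-linear map D : A → A satisfies D(m·σ(f)) = D(m)·f + m·∂_q(f) for all m, f ∈ A if and only if there exists a ∈ A such that D(g) = a·σ⁻¹(g) + ∂_q(σ⁻¹(g)) for all g ∈ A; in that case necessarily a = D(1). Consequently such maps D (equivalently, hom-connections on the right A-module A with respect to the calculus Ω¹ = du·A with u·du = q·du·u) are in bijective correspondence with elements of A. -/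
/-!
`∂_q` is a `σ`-twisted derivation: `∂_q(fg) = ∂_q(f)·g + σ(f)·∂_q(g)`. For any such `δ`, taking
`m = 1` and `f = σ⁻¹(g)` in `D(m·σ(f)) = D(m)·f + m·δ(f)` shows `D(g) = D(1)·σ⁻¹(g) + δ(σ⁻¹(g))`,
and conversely this formula satisfies the rule by the twisted Leibniz rule for `δ`.
-/

open LaurentPolynomial

noncomputable section

def jacksonDeriv (q : ℂ) (σ : LaurentPolynomial ℂ ≃ₐ[ℂ] LaurentPolynomial ℂ)
    (f : LaurentPolynomial ℂ) : LaurentPolynomial ℂ :=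
  C (q - 1)⁻¹ * (σ f - f) * T (-1)

section TwistedLeibniz

variable {A : Type*} [Semiring A] (σ : A ≃+* A) (δ D : A → A)

theorem twistedLeibniz_iff_eq_mul_symm_add
    (hδ : ∀ x y, δ (x * y) = δ x * y + σ x * δ y) :
    (∀ m f, D (m * σ f) = D m * f + m * δ f) ↔
      ∀ g, D g = D 1 * σ.symm g + δ (σ.symm g) := by
  constructor
  · intro hD g
    simpa using hD 1 (σ.symm g)
  · intro hD m f
    rw [hD (m * σ f), hD m, map_mul, σ.symm_apply_apply, hδ, σ.apply_symm_apply, add_mul,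
      mul_assoc, add_assoc]

end TwistedLeibniz

theorem jacksonDeriv_mul (q : ℂ) (σ : LaurentPolynomial ℂ ≃ₐ[ℂ] LaurentPolynomial ℂ)
    (f g : LaurentPolynomial ℂ) :
    jacksonDeriv q σ (f * g) = jacksonDeriv q σ f * g + σ f * jacksonDeriv q σ g := by
  simp only [jacksonDeriv, map_mul]
  ring

theorem homConnections_on_laurent_correspond_to_elements_general
    (q : ℂ)
    (σ : LaurentPolynomial ℂ ≃ₐ[ℂ] LaurentPolynomial ℂ)
    (D : LaurentPolynomial ℂ →ₗ[ℂ] LaurentPolynomial ℂ) :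
    (∀ m f : LaurentPolynomial ℂ,
        D (m * σ f) = D m * f + m * jacksonDeriv q σ f) ↔
    (∃ a : LaurentPolynomial ℂ,
        (∀ g : LaurentPolynomial ℂ,
          D g = a * σ.symm g + jacksonDeriv q σ (σ.symm g)) ∧ a = D 1) := by
  refine (twistedLeibniz_iff_eq_mul_symm_add σ.toRingEquiv _ D (jacksonDeriv_mul q σ)).trans ?_
  exact ⟨fun hD => ⟨D 1, hD, rfl⟩, fun ⟨_, hD, ha⟩ => ha ▸ hD⟩

/-- Let `σ` be the ℂ-algebra automorphism of `ℂ[u,u⁻¹]` determined by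
`σ(u) = q·u` (`q ≠ 0, 1`).  A ℂ-linear map `D` on `ℂ[u,u⁻¹]` satisfies the twisted
Leibniz rule `D(m·σ(f)) = D(m)·f + m·∂_q(f)` iff there exists `a` (necessarily `a = D 1`)
such that `D(g) = a·σ⁻¹(g) + ∂_q(σ⁻¹(g))` for all `g`.  Hence such maps `D`, i.e.
hom-connections on the right module `A` for the calculus with `u·du = q·du·u`,
correspond bijectively to elements `a ∈ A`. -/
theorem homConnections_on_laurent_correspond_to_elements
    (q : ℂ) (hq0 : q ≠ 0) (hq1 : q ≠ 1)
    (σ : LaurentPolynomial ℂ ≃ₐ[ℂ] LaurentPolynomial ℂ)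
    (hσ : σ (T 1) = C q * T 1)
    (D : LaurentPolynomial ℂ →ₗ[ℂ] LaurentPolynomial ℂ) :
    (∀ m f : LaurentPolynomial ℂ,
        D (m * σ f) = D m * f + m * jacksonDeriv q σ f) ↔
    (∃ a : LaurentPolynomial ℂ,
        (∀ g : LaurentPolynomial ℂ,
          D g = a * σ.symm g + jacksonDeriv q σ (σ.symm g)) ∧ a = D 1) :=
  homConnections_on_laurent_correspond_to_elements_general q σ D

end
end

section
/- Assume A and Ω¹ are finite-dimensional over k and let (M, ∇₀) be a hom-connection, i.e. ∇₀ : Hom_A(Ω¹, M) → M is k-linear with ∇₀(f·a) = ∇₀(f)·a + f(da), where (f·a)(ω) = f(aω). Define ∇̄ := −∇₀∘Υ : T → M. Then T is stable under the operation Σᵢ lᵢ⊗mᵢ ↦ Σᵢ (lᵢ·a)⊗mᵢ, and for all Σᵢ lᵢ⊗mᵢ ∈ T and a ∈ A: ∇̄(Σᵢ lᵢ⊗mᵢ)·a = ∇̄(Σᵢ (lᵢ·a)⊗mᵢ) + Σᵢ lᵢ(da)·mᵢ (i.e. ∇̄ is a connection in the left C-comodule M with respect to the coderivation λ = d*). 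-/
set_option linter.unusedSectionVars false

open MulOpposite TensorProduct

noncomputable section

variable {k A Ω M : Type*} [Field k] [Ring A] [Algebra k A]
  [AddCommGroup Ω] [Module k Ω] [Module A Ω] [Module Aᵐᵒᵖ Ω]
  [SMulCommClass A Aᵐᵒᵖ Ω] [SMulCommClass Aᵐᵒᵖ k Ω] [SMulCommClass A k Ω]
  [IsScalarTower k Aᵐᵒᵖ Ω]
  [AddCommGroup M] [Module k M] [Module Aᵐᵒᵖ M]
  [SMulCommClass Aᵐᵒᵖ k M] [IsScalarTower k Aᵐᵒᵖ M]

/-- The left `A`-action on `L = Hom_k(Ω¹, k)`: `(a·l)(ω) := l(ωa)`. -/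
def aL (a : A) : (Ω →ₗ[k] k) →ₗ[k] (Ω →ₗ[k] k) :=
  (DistribMulAction.toLinearMap k Ω (op a)).dualMap

/-- The right `A`-action on `L = Hom_k(Ω¹, k)`: `(l·a)(ω) := l(aω)`. -/
def raL (a : A) : (Ω →ₗ[k] k) →ₗ[k] (Ω →ₗ[k] k) :=
  (DistribMulAction.toLinearMap k Ω a).dualMap

/-- The right `A`-action on `M` as a `k`-linear endomorphism. -/
def mR (a : A) : M →ₗ[k] M := DistribMulAction.toLinearMap k M (op a)

/-- The cotensor product `T = L □_C M ⊆ L ⊗_k M`. -/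
def cotensor : Submodule k ((Ω →ₗ[k] k) ⊗[k] M) :=
  ⨅ a : A, LinearMap.ker
    ((@HSub.hSub _ _ _ (@instHSub _ (@LinearMap.instSub _ _ _ _ _ _ _ TensorProduct.addCommGroup _ _ _))
      (TensorProduct.map (aL (k := k) (Ω := Ω) a) (LinearMap.id : M →ₗ[k] M))
      (TensorProduct.map (LinearMap.id : (Ω →ₗ[k] k) →ₗ[k] (Ω →ₗ[k] k))
        (mR (k := k) (M := M) a)) :
      (Ω →ₗ[k] k) ⊗[k] M →ₗ[k] (Ω →ₗ[k] k) ⊗[k] M))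

/-- The operation `Σ lᵢ⊗mᵢ ↦ Σ (lᵢ·a)⊗mᵢ` on `L ⊗ M`. -/
def tsm (a : A) : (Ω →ₗ[k] k) ⊗[k] M →ₗ[k] (Ω →ₗ[k] k) ⊗[k] M :=
  TensorProduct.map (raL (k := k) (Ω := Ω) a) (LinearMap.id : M →ₗ[k] M)

lemma dualTensorHom_map_aL (a : A) (t : (Ω →ₗ[k] k) ⊗[k] M) (ω : Ω) :
    dualTensorHom k Ω M
        (TensorProduct.map (aL (k := k) (Ω := Ω) a) (LinearMap.id : M →ₗ[k] M) t) ω =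
      dualTensorHom k Ω M t (op a • ω) := by
  induction t using TensorProduct.induction_on with
  | zero => simp
  | tmul l m => simp [aL, dualTensorHom_apply, DistribMulAction.toLinearMap]
  | add x y hx hy => simp [map_add, hx, hy]

lemma dualTensorHom_map_mR (a : A) (t : (Ω →ₗ[k] k) ⊗[k] M) (ω : Ω) :
    dualTensorHom k Ω M
        (TensorProduct.map (LinearMap.id : (Ω →ₗ[k] k) →ₗ[k] (Ω →ₗ[k] k))
          (mR (k := k) (M := M) a) t) ω =
      op a • dualTensorHom k Ω M t ω := by
  induction t using TensorProduct.induction_on with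
  | zero => simp
  | tmul l m =>
      simp only [TensorProduct.map_tmul, LinearMap.id_coe, id_eq, dualTensorHom_apply, mR,
        DistribMulAction.toLinearMap, DistribSMul.toLinearMap_apply]
      exact smul_comm _ _ _
  | add x y hx hy => simp [map_add, hx, hy, smul_add]

/-- `Υ : T → Hom_A(Ω¹, M)`, `Υ(Σ lᵢ⊗mᵢ)(ω) = Σ lᵢ(ω)·mᵢ` (a right `A`-linear map). -/
def Upsilon (t : ↥(cotensor (k := k) (A := A) (Ω := Ω) (M := M))) : Ω →ₗ[Aᵐᵒᵖ] M where
  toFun ω := dualTensorHom k Ω M t.1 ω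
  map_add' x y := by simp
  map_smul' b ω := by
    have ht := t.2
    simp only [cotensor, Submodule.mem_iInf, LinearMap.mem_ker] at ht
    replace ht : ∀ a : A, TensorProduct.map (aL (k := k) (Ω := Ω) a) (LinearMap.id : M →ₗ[k] M) t.1 =
        TensorProduct.map LinearMap.id (mR (k := k) (M := M) a) t.1 := fun a => sub_eq_zero.1 (ht a)
    have h := congrArg (fun s => dualTensorHom k Ω M s ω) (ht b.unop)
    try simp only at h
    rw [dualTensorHom_map_aL, dualTensorHom_map_mR, op_unop] at h
    show dualTensorHom k Ω M t.1 (b • ω) = b • dualTensorHom k Ω M t.1 ω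
    exact h

lemma mem_cotensor_iff {t : (Ω →ₗ[k] k) ⊗[k] M} :
    t ∈ cotensor (k := k) (A := A) ↔
      ∀ a : A, TensorProduct.map (aL (k := k) (Ω := Ω) a) LinearMap.id t =
        TensorProduct.map LinearMap.id (mR (k := k) (M := M) a) t := by
  simp only [cotensor, Submodule.mem_iInf, LinearMap.mem_ker]
  -- `cotensor` subtracts with an explicitly supplied instance, so `sub_eq_zero` only matches
  -- up to unfolding and needs its arguments given.
  exact forall_congr' fun a =>
    sub_eq_zero (a := TensorProduct.map (aL a) LinearMap.id t)
      (b := TensorProduct.map LinearMap.id (mR a) t)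

lemma aL_comp_raL (a b : A) :
    (aL (k := k) (Ω := Ω) b).comp (raL a) = (raL a).comp (aL b) := by
  ext l ω
  simp [aL, raL, smul_comm, DistribMulAction.toLinearMap]

lemma tsm_mem_cotensor {t : (Ω →ₗ[k] k) ⊗[k] M} (ht : t ∈ cotensor (k := k) (A := A))
    (a : A) : tsm (M := M) a t ∈ cotensor (k := k) (A := A) := by
  rw [mem_cotensor_iff] at ht ⊢
  intro b
  have left_comm : TensorProduct.map (aL b) LinearMap.id (tsm a t) =
      tsm (M := M) a (TensorProduct.map (aL b) LinearMap.id t) := by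
    simp only [tsm, ← LinearMap.comp_apply, ← TensorProduct.map_comp, aL_comp_raL]
  have right_comm : TensorProduct.map LinearMap.id (mR b) (tsm a t) =
      tsm (M := M) a (TensorProduct.map LinearMap.id (mR b) t) := by
    simp only [tsm, ← LinearMap.comp_apply, ← TensorProduct.map_comp, LinearMap.id_comp,
      LinearMap.comp_id]
  rw [left_comm, right_comm, ht b]

lemma dualTensorHom_tsm (a : A) (t : (Ω →ₗ[k] k) ⊗[k] M) (ω : Ω) :
    dualTensorHom k Ω M (tsm a t) ω = dualTensorHom k Ω M t (a • ω) := by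
  induction t using TensorProduct.induction_on with
  | zero => simp
  | tmul l m => simp [tsm, raL, dualTensorHom_apply, DistribMulAction.toLinearMap]
  | add x y hx hy => simp only [map_add, LinearMap.add_apply, hx, hy]

lemma Upsilon_eq_rsmulHom {t t' : cotensor (k := k) (A := A) (Ω := Ω) (M := M)} {a : A}
    (h : t'.1 = tsm a t.1) : Upsilon t' = rsmulHom a (Upsilon t) := by
  ext ω
  exact (congrArg (dualTensorHom k Ω M · ω) h).trans (dualTensorHom_tsm a t.1 ω)

theorem comodule_connection_from_homConnection_general
    (d : A →ₗ[k] Ω)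
    (D : (Ω →ₗ[Aᵐᵒᵖ] M) → M) (hD : IsHomConnection d D) :
    (∀ (t : ↥(cotensor (k := k) (A := A) (Ω := Ω) (M := M))) (a : A),
        tsm (k := k) (Ω := Ω) (M := M) a t.1 ∈
          cotensor (k := k) (A := A) (Ω := Ω) (M := M)) ∧
    (∀ (t t' : ↥(cotensor (k := k) (A := A) (Ω := Ω) (M := M))) (a : A),
        t'.1 = tsm (k := k) (Ω := Ω) (M := M) a t.1 →
        op a • (-(D (Upsilon t))) =
          -(D (Upsilon t')) + dualTensorHom k Ω M t.1 (d a)) := by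
  refine ⟨fun t a => tsm_mem_cotensor t.2 a, fun t t' a h => ?_⟩
  rw [Upsilon_eq_rsmulHom h, hD.2, smul_neg, neg_add]
  exact (neg_add_cancel_right _ _).symm

/-- For finite-dimensional `A`, `Ω¹` and a hom-connection `(M, ∇₀)`,
the subspace `T` is stable under `Σ lᵢ⊗mᵢ ↦ Σ (lᵢ·a)⊗mᵢ`, and `∇̄ = −∇₀∘Υ` satisfies
`∇̄(t)·a = ∇̄(t·a) + Σᵢ lᵢ(da)·mᵢ`, i.e. it is a connection in the left `C`-comodule
`M` with respect to the coderivation `λ = d*`. -/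
theorem comodule_connection_from_homConnection
    [FiniteDimensional k A] [FiniteDimensional k Ω]
    (d : A →ₗ[k] Ω) (hd : IsFODC d)
    (D : (Ω →ₗ[Aᵐᵒᵖ] M) → M) (hD : IsHomConnection d D) :
    (∀ (t : ↥(cotensor (k := k) (A := A) (Ω := Ω) (M := M))) (a : A),
        tsm (k := k) (Ω := Ω) (M := M) a t.1 ∈
          cotensor (k := k) (A := A) (Ω := Ω) (M := M)) ∧
    (∀ (t t' : ↥(cotensor (k := k) (A := A) (Ω := Ω) (M := M))) (a : A),
        t'.1 = tsm (k := k) (Ω := Ω) (M := M) a t.1 →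
        op a • (-(D (Upsilon t))) =
          -(D (Upsilon t')) + dualTensorHom k Ω M t.1 (d a)) :=
  comodule_connection_from_homConnection_general d D hD

end
end

section
/- Let B ⊆ A be a subalgebra with db = 0 for all b ∈ B, and let N be a right B-module. Then for every right A-linear map g : Ω¹ → Hom_B(A, N), the map a ↦ −g(da)(1) is right B-linear, and ∇₀ : Hom_A(Ω¹, Hom_B(A, N)) → Hom_B(A, N), ∇₀(g)(a) := −g(da)(1), is a hom-connection on the right A-module Hom_B(A, N) with respect to (Ω¹, d). In particular (taking B = k, N = k), the vector-space dual of A always admits a hom-connection, even if A itself does not. -/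
/-!
Evaluate `g (-) 1` on the Leibniz rule, using that right `A`-linearity of `g` gives
`g (ω·a) 1 = g ω a`. For `b ∈ B` the rule reads `d(ab) = (da)·b`, and right `B`-linearity of
`g (da)` gives the first claim; in general `d(ap) = a·dp + (da)·p` gives the second.
-/

open MulOpposite

section

variable {k A Ω N : Type*} [Field k] [Ring A] [Algebra k A]
  [AddCommGroup Ω] [Module k Ω] [Module A Ω] [Module Aᵐᵒᵖ Ω]
  [AddCommGroup N] [Module k N]

theorem IsFODC.map_mul_of_map_eq_zero {d : A →ₗ[k] Ω} (hd : IsFODC d) (a : A) {b : A}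
    (hb : d b = 0) : d (a * b) = op b • d a := by
  rw [hd, hb, smul_zero, zero_add]

def dualHomConnection (d : A →ₗ[k] Ω) (g : Ω →ₗ[k] (A →ₗ[k] N)) (a : A) : N :=
  -(g (d a) 1)

theorem dualHomConnection_mul_right {d : A →ₗ[k] Ω} (hd : IsFODC d)
    {S : Subalgebra k A} [Module (↥S)ᵐᵒᵖ N] (hdS : ∀ b ∈ S, d b = 0)
    {g : Ω →ₗ[k] (A →ₗ[k] N)}
    (hg1 : ∀ (ω : Ω) (a : A) (b : ↥S), g ω (a * (b : A)) = op b • g ω a)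
    (hg2 : ∀ (ω : Ω) (a p : A), g (op a • ω) p = g ω (a * p)) (a : A) (b : ↥S) :
    dualHomConnection d g (a * b) = op b • dualHomConnection d g a := by
  have hgb : g (d a) b = op b • g (d a) 1 := by simpa only [one_mul] using hg1 (d a) 1 b
  rw [dualHomConnection, dualHomConnection, hd.map_mul_of_map_eq_zero a (hdS b b.2), hg2,
    mul_one, hgb, smul_neg]

theorem dualHomConnection_leibniz {d : A →ₗ[k] Ω} (hd : IsFODC d)
    {g : Ω →ₗ[k] (A →ₗ[k] N)} (hg2 : ∀ (ω : Ω) (a p : A), g (op a • ω) p = g ω (a * p))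
    (a p : A) :
    -(g (a • d p) 1) = dualHomConnection d g (a * p) + g (d a) p := by
  rw [dualHomConnection, hd a p, map_add, LinearMap.add_apply, hg2, mul_one]
  abel

end

section

variable {k A Ω N : Type*} [Field k] [Ring A] [Algebra k A]
  [AddCommGroup Ω] [Module k Ω] [Module A Ω] [Module Aᵐᵒᵖ Ω]
  [SMulCommClass A Aᵐᵒᵖ Ω]
  [AddCommGroup N] [Module k N]

/-- Let `S = B` be a subalgebra of `A` annihilated by `d`, `N` a right
`B`-module and `g ∈ Hom_A(Ω¹, Hom_B(A,N))`.  Then: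
(1) the map `a ↦ −g(da)(1)` is right `B`-linear (it lies in `Hom_B(A,N)`), and
(2) `∇₀ : g ↦ (a ↦ −g(da)(1))` satisfies the hom-connection Leibniz rule
`∇₀(g·a) = ∇₀(g)·a + g(da)` (evaluated at every point `p ∈ A`). -/
theorem induced_homConnection_on_dual
    (d : A →ₗ[k] Ω) (hd : IsFODC d)
    (S : Subalgebra k A) [Module (↥S)ᵐᵒᵖ N]
    (hdS : ∀ b ∈ S, d b = 0)
    (g : Ω →ₗ[k] (A →ₗ[k] N))
    (hg1 : ∀ (ω : Ω) (a : A) (b : ↥S), g ω (a * (b : A)) = op b • g ω a)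
    (hg2 : ∀ (ω : Ω) (a p : A), g (op a • ω) p = g ω (a * p)) :
    (∀ (a : A) (b : ↥S), -(g (d (a * (b : A))) 1) = op b • (-(g (d a) 1))) ∧
    (∀ a p : A, -(g (a • d p) 1) = -(g (d (a * p)) 1) + g (d a) p) :=
  ⟨dualHomConnection_mul_right hd hdS hg1 hg2, dualHomConnection_leibniz hd hg2⟩

end
end
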